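/- Let s be a primitive string of length n ≥ 2 over Σ whose rotation matrix is sorted by a local ordering of context length 1. Let u and v be rotations of s with u ≺ v that are consecutive in the sorted order (no rotation w satisfies u ≺ w ≺ v), and suppose u and v have the same first symbol and the same last symbol. Then their right shifts u' and v' satisfy u' ≺ v' and are again consecutive in the sorted order (no rotation w satisfies u' ≺ w ≺ v'). -/
import Mathlib


open scoped Classical

variable {A : Type*}

/-- Longest common prefix of two lists. -/
def lcp [DecidableEq A] : List A → List A → List A
  | a :: as, b :: bs => if a = b then a :: lcp as bs else []
  | _, _ => []

/-- A string is primitive if its cyclic rotations are pairwise distinct. -/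
def Primitive (s : List A) : Prop :=
  ∀ i j, i < s.length → j < s.length → s.rotate i = s.rotate j → i = j

/-- The context-adaptive comparison relation on rotations. -/
def Prec [DecidableEq A] (π : List A → A → A → Prop) (u v : List A) : Prop :=
  ∃ a b, u[(lcp u v).length]? = some a ∧ v[(lcp u v).length]? = some b ∧
    π (lcp u v) a b

/-- The index of the right shift of the rotation `R_i` of a string of length
`n`, i.e. `(i - 1) mod n`. -/
def rshift (n i : ℕ) : ℕ := (i + n - 1) % n

section lemmas
variable [DecidableEq A]

lemma lcp_self (l : List A) : lcp l l = l := by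
  induction l with
  | nil => rfl
  | cons a as ih => simp [lcp, ih]

lemma lcp_append (x l₁ l₂ : List A) : lcp (x ++ l₁) (x ++ l₂) = x ++ lcp l₁ l₂ := by
  induction x with
  | nil => rfl
  | cons a as ih => simp [lcp, ih]

lemma lcp_cons_ne {a b : A} (h : a ≠ b) (l₁ l₂ : List A) : lcp (a :: l₁) (b :: l₂) = [] := by
  simp [lcp, h]

lemma lcp_prefix_left (l₁ l₂ : List A) : lcp l₁ l₂ <+: l₁ := by
  induction l₁ generalizing l₂ with
  | nil => cases l₂ <;> simp [lcp]
  | cons a as ih =>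
    cases l₂ with
    | nil => simp [lcp]
    | cons b bs =>
      by_cases h : a = b
      · simpa [lcp, h] using ih bs
      · simp [lcp, h]

lemma lcp_prefix_right (l₁ l₂ : List A) : lcp l₁ l₂ <+: l₂ := by
  induction l₁ generalizing l₂ with
  | nil => cases l₂ <;> simp [lcp]
  | cons a as ih =>
    cases l₂ with
    | nil => simp [lcp]
    | cons b bs =>
      by_cases h : a = b
      · subst h; simpa [lcp] using ih bs
      · simp [lcp, h]

lemma lcp_decomp {l₁ l₂ : List A} (h : l₁.length = l₂.length) (hne : l₁ ≠ l₂) :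
    ∃ a b t₁ t₂, a ≠ b ∧ l₁ = lcp l₁ l₂ ++ a :: t₁ ∧ l₂ = lcp l₁ l₂ ++ b :: t₂ := by
  induction l₁ generalizing l₂ with
  | nil => cases l₂ with
    | nil => exact absurd rfl hne
    | cons b bs => simp at h
  | cons a as ih =>
    cases l₂ with
    | nil => simp at h
    | cons b bs =>
      by_cases hab : a = b
      · subst hab
        have hne' : as ≠ bs := fun hh => hne (by rw [hh])
        obtain ⟨a', b', t₁, t₂, hab', h1, h2⟩ := ih (by simpa using h) hne'
        exact ⟨a', b', t₁, t₂, hab', by simp [lcp]; exact ⟨h1, h2⟩⟩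
      · exact ⟨a, b, as, bs, hab, by simp [lcp_cons_ne hab]⟩

lemma prec_iff (π : List A → A → A → Prop) {a b : A} (hab : a ≠ b) (p t₁ t₂ : List A) :
    Prec π (p ++ a :: t₁) (p ++ b :: t₂) ↔ π p a b := by
  have hl : lcp (p ++ a :: t₁) (p ++ b :: t₂) = p := by
    rw [lcp_append, lcp_cons_ne hab, List.append_nil]
  constructor
  · rintro ⟨a', b', ha, hb, hπ⟩
    rw [hl] at ha hb hπ
    rw [List.getElem?_append_right le_rfl] at ha hb
    simp at ha hb
    rwa [ha, hb]
  · intro h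
    refine ⟨a, b, ?_, ?_, by rwa [hl]⟩ <;>
      rw [hl, List.getElem?_append_right le_rfl] <;> simp

lemma prec_ne (π : List A → A → A → Prop) {u v : List A} (h : Prec π u v) : u ≠ v := by
  rintro rfl
  obtain ⟨a, b, ha, _, _⟩ := h
  rw [lcp_self] at ha
  simp at ha

lemma eq_append_cons_of_prefix_getElem {p l : List A} {a : A}
    (hp : p <+: l) (h : l[p.length]? = some a) :
    l = p ++ a :: l.drop (p.length + 1) := by
  have hlt : p.length < l.length := by
    by_contra hh
    rw [List.getElem?_eq_none (by omega)] at h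
    simp at h
  have h1 : p ++ l.drop p.length = l := List.prefix_iff_eq_append.mp hp
  have h2 : l.drop p.length = l[p.length] :: l.drop (p.length + 1) :=
    List.drop_eq_getElem_cons hlt
  have h3 : l[p.length] = a := by
    have := List.getElem?_eq_getElem hlt
    rw [h] at this
    exact (Option.some_injective _ this.symm)
  have := h1
  rw [h2, h3] at this
  exact this.symm

end lemmas

section localOrder
variable [DecidableEq A] (π : List A → A → A → Prop)
  (hloc : ∀ (x y : List A) (c : A), π (x ++ [c]) = π (y ++ [c]))

include hloc in
lemma pi_cons (c : A) {x : List A} (hx : x ≠ []) : π (c :: x) = π x := by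
  obtain ⟨y, d, rfl⟩ : ∃ y d, x = y ++ [d] := by
    rcases List.eq_nil_or_concat x with h | ⟨y, d, h⟩
    · exact absurd h hx
    · exact ⟨y, d, by simpa using h⟩
  have : c :: (y ++ [d]) = (c :: y) ++ [d] := by simp
  rw [this, hloc (c :: y) y d]

include hloc in
lemma prec_shift {c : A} {x t₁ t₂ : List A} (hx : x ≠ []) (ht : t₁.length = t₂.length) :
    Prec π ((c :: x) ++ t₁) ((c :: x) ++ t₂) ↔ Prec π ((x ++ t₁) ++ [c]) ((x ++ t₂) ++ [c]) := by
  by_cases hne : t₁ = t₂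
  · subst hne
    constructor <;> intro h <;> exact absurd rfl (prec_ne π h)
  · obtain ⟨a, b, r₁, r₂, hab, h1, h2⟩ := lcp_decomp ht hne
    set L := lcp t₁ t₂ with hL
    have e1 : (c :: x) ++ t₁ = ((c :: x) ++ L) ++ a :: r₁ := by rw [h1]; simp
    have e2 : (c :: x) ++ t₂ = ((c :: x) ++ L) ++ b :: r₂ := by rw [h2]; simp
    have e3 : (x ++ t₁) ++ [c] = (x ++ L) ++ a :: (r₁ ++ [c]) := by rw [h1]; simp
    have e4 : (x ++ t₂) ++ [c] = (x ++ L) ++ b :: (r₂ ++ [c]) := by rw [h2]; simp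
    rw [e1, e2, e3, e4, prec_iff π hab, prec_iff π hab]
    have : (c :: x) ++ L = c :: (x ++ L) := by simp
    rw [this, pi_cons π hloc c (by simp [hx])]
end localOrder


lemma rotate_last (s : List A) (i : ℕ) (t : List A) (c : A)
    (h : s.rotate i = t ++ [c]) : s.rotate (rshift s.length i) = c :: t := by
  have hn : s.length = t.length + 1 := by
    rw [← List.length_rotate s i, h]; simp
  have he : rshift s.length i = (i + t.length) % s.length := by
    unfold rshift; congr 1; omega
  rw [he, List.rotate_mod, ← List.rotate_rotate, h,
    List.rotate_eq_drop_append_take (by simp), List.drop_left, List.take_left]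
  rfl

lemma rotate_succ (s : List A) (k : ℕ) (t : List A) (c : A)
    (h : s.rotate k = c :: t) : s.rotate ((k + 1) % s.length) = t ++ [c] := by
  rw [List.rotate_mod, ← List.rotate_rotate, h,
    List.rotate_eq_drop_append_take (by simp), List.drop_one, List.take_one]
  simp


/-- for a local ordering of context length 1, if `u ≺ v` are
consecutive rotations in the sorted order having the same first symbol and the
same last symbol, then their right shifts `u' ≺ v'` are again consecutive. -/
theorem stmt11 [Fintype A] [DecidableEq A]
    (π : List A → A → A → Prop) (hπ : ∀ x, IsStrictTotalOrder A (π x))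
    (hloc : ∀ (x y : List A) (c : A), π (x ++ [c]) = π (y ++ [c]))
    (s : List A) (hs : 2 ≤ s.length) (hprim : Primitive s)
    (i j : ℕ) (hi : i < s.length) (hj : j < s.length)
    (huv : Prec π (s.rotate i) (s.rotate j))
    (hconsec : ∀ k < s.length,
      ¬ (Prec π (s.rotate i) (s.rotate k) ∧ Prec π (s.rotate k) (s.rotate j)))
    (hfirst : (s.rotate i).head? = (s.rotate j).head?)
    (hlast : (s.rotate i).getLast? = (s.rotate j).getLast?) :
    Prec π (s.rotate (rshift s.length i)) (s.rotate (rshift s.length j)) ∧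
    ∀ k < s.length,
      ¬ (Prec π (s.rotate (rshift s.length i)) (s.rotate k) ∧
         Prec π (s.rotate k) (s.rotate (rshift s.length j))) := by
  have hlu : (s.rotate i).length = s.length := List.length_rotate s i
  have hlv : (s.rotate j).length = s.length := List.length_rotate s j
  have huvne : s.rotate i ≠ s.rotate j := prec_ne π huv
  obtain ⟨a, b, t₁, t₂, hab, hu, hv⟩ := lcp_decomp (by rw [hlu, hlv]) huvne
  set x := lcp (s.rotate i) (s.rotate j) with hx
  have hπab : π x a b := (prec_iff π hab x t₁ t₂).mp (by rw [← hu, ← hv]; exact huv)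
  -- x is nonempty since u, v share first symbol
  have hxne : x ≠ [] := by
    intro hxe
    rw [hxe] at hu hv
    simp only [List.nil_append] at hu hv
    rw [hu, hv] at hfirst
    simp at hfirst
    exact hab hfirst
  -- lengths of tails agree
  have ht12 : t₁.length = t₂.length := by
    have h1 := hlu; have h2 := hlv
    rw [hu] at h1; rw [hv] at h2
    simp at h1 h2; omega
  -- common last symbol c
  have hne1 : s.rotate i ≠ [] := by rw [hu]; simp
  obtain ⟨c, hc⟩ := Option.isSome_iff_exists.mp (List.getLast?_isSome.mpr hne1)
  have hc' : (s.rotate j).getLast? = some c := by rw [← hlast]; exact hc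
  -- tails are nonempty
  have ht1ne : t₁ ≠ [] := by
    intro h1
    have h2 : t₂ = [] := List.length_eq_zero_iff.mp (by rw [← ht12, h1]; rfl)
    rw [hu, h1] at hc; rw [hv, h2] at hc'
    simp at hc hc'
    rw [hc, hc'] at hab
    exact hab rfl
  have ht2ne : t₂ ≠ [] := fun h2 =>
    ht1ne (List.length_eq_zero_iff.mp (by rw [ht12, h2]; rfl))
  -- t₁ = u₃ ++ [c], t₂ = v₃ ++ [c]
  obtain ⟨u₃, hu₃⟩ : ∃ u₃, t₁ = u₃ ++ [c] := by
    rcases List.eq_nil_or_concat t₁ with h | ⟨u₃, e, h⟩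
    · exact absurd h ht1ne
    · simp only [List.concat_eq_append] at h
      refine ⟨u₃, ?_⟩
      rw [hu, h] at hc
      have he : x ++ a :: (u₃ ++ [e]) = (x ++ a :: u₃) ++ [e] := by simp
      rw [he, List.getLast?_concat] at hc
      simp at hc
      rw [h, hc]
  obtain ⟨v₃, hv₃⟩ : ∃ v₃, t₂ = v₃ ++ [c] := by
    rcases List.eq_nil_or_concat t₂ with h | ⟨v₃, e, h⟩
    · exact absurd h ht2ne
    · simp only [List.concat_eq_append] at h
      refine ⟨v₃, ?_⟩
      rw [hv, h] at hc'
      have he : x ++ b :: (v₃ ++ [e]) = (x ++ b :: v₃) ++ [e] := by simp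
      rw [he, List.getLast?_concat] at hc'
      simp at hc'
      rw [h, hc']
  have hu34 : u₃.length = v₃.length := by
    rw [hu₃, hv₃] at ht12; simp at ht12; exact ht12
  -- right shifts
  have hueq : s.rotate i = (x ++ a :: u₃) ++ [c] := by rw [hu, hu₃]; simp
  have hveq : s.rotate j = (x ++ b :: v₃) ++ [c] := by rw [hv, hv₃]; simp
  have hu' : s.rotate (rshift s.length i) = c :: (x ++ a :: u₃) :=
    rotate_last s i _ c hueq
  have hv' : s.rotate (rshift s.length j) = c :: (x ++ b :: v₃) :=
    rotate_last s j _ c hveq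
  have hu'app : c :: (x ++ a :: u₃) = (c :: x) ++ (a :: u₃) := by simp
  have hv'app : c :: (x ++ b :: v₃) = (c :: x) ++ (b :: v₃) := by simp
  have goal1 : Prec π (s.rotate (rshift s.length i)) (s.rotate (rshift s.length j)) := by
    rw [hu', hv', hu'app, hv'app]
    refine (prec_shift π hloc hxne (by simp [hu34])).mpr ?_
    rw [← hueq, ← hveq]
    exact huv
  refine ⟨goal1, ?_⟩
  rintro k hk ⟨h1, h2⟩
  rw [hu'] at h1
  rw [hv'] at h2
  -- lengths
  have hlw : (s.rotate k).length = s.length := List.length_rotate s k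
  have hlenu' : (c :: (x ++ a :: u₃)).length = s.length := by
    rw [← hu']; exact List.length_rotate s _
  have hPlt : (c :: x).length < s.length := by simp at hlenu' ⊢; omega
  -- Step F1: (c :: x) is a prefix of s.rotate k
  obtain ⟨α, β, hα, hβ, hπ1⟩ := id h1
  have hαβ : α ≠ β := by
    intro h; rw [h] at hπ1; exact (hπ _).irrefl β hπ1
  set q := lcp (c :: (x ++ a :: u₃)) (s.rotate k) with hq
  have hqu : q <+: c :: (x ++ a :: u₃) := lcp_prefix_left _ _
  have hqw : q <+: s.rotate k := lcp_prefix_right _ _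
  have hPu' : (c :: x) <+: c :: (x ++ a :: u₃) := ⟨a :: u₃, by simp⟩
  have hPv' : (c :: x) <+: c :: (x ++ b :: v₃) := ⟨b :: v₃, by simp⟩
  have hPw : (c :: x) <+: s.rotate k := by
    rcases List.prefix_or_prefix_of_prefix hPu' hqu with h | h
    · exact h.trans hqw
    · by_cases hlen : q.length = (c :: x).length
      · rw [h.eq_of_length hlen] at hqw; exact hqw
      · exfalso
        have hlt : q.length < (c :: x).length := lt_of_le_of_ne h.length_le hlen
        have hu'q : (c :: (x ++ a :: u₃))[q.length]? = (c :: x)[q.length]? := by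
          obtain ⟨r, hr⟩ := hPu'
          rw [← hr, List.getElem?_append_left hlt]
        have hα' : (c :: x)[q.length]? = some α := by rw [← hu'q]; exact hα
        have hβv : (c :: (x ++ b :: v₃))[q.length]? = some α := by
          obtain ⟨r, hr⟩ := hPv'
          rw [← hr, List.getElem?_append_left hlt]
          exact hα'
        have hqv' : q <+: c :: (x ++ b :: v₃) := h.trans hPv'
        have hwdec := eq_append_cons_of_prefix_getElem hqw hβ
        have hv'dec := eq_append_cons_of_prefix_getElem hqv' hβv
        have hπ2 : π q β α := by
          have h2' := h2
          rw [hwdec, hv'dec] at h2'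
          exact (prec_iff π hαβ.symm q _ _).mp h2'
        haveI := hπ q
        exact (hπ q).irrefl α (trans_of (π q) hπ1 hπ2)
  -- Step F2: decompose s.rotate k
  obtain ⟨d, hd⟩ : ∃ d, (s.rotate k)[(c :: x).length]? = some d :=
    ⟨_, List.getElem?_eq_getElem (by rw [hlw]; exact hPlt)⟩
  have hwdec := eq_append_cons_of_prefix_getElem hPw hd
  set w₂ := (s.rotate k).drop ((c :: x).length + 1) with hw₂
  -- length of w₂
  have hlw₂ : w₂.length = u₃.length := by
    have h1 := hlw
    rw [hwdec] at h1
    simp at h1 hlenu' ⊢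
    omega
  -- Step F3: left shift of s.rotate k
  have hwc : s.rotate k = c :: (x ++ d :: w₂) := by rw [hwdec]; simp
  have hw' : s.rotate ((k + 1) % s.length) = (x ++ d :: w₂) ++ [c] :=
    rotate_succ s k _ c hwc
  -- Step F4: apply hconsec at (k+1) % n
  have hA : Prec π ((x ++ (a :: u₃)) ++ [c]) ((x ++ (d :: w₂)) ++ [c]) := by
    refine (prec_shift π hloc hxne (by simp [hlw₂])).mp ?_
    rw [← hu'app]
    have : (c :: x) ++ (d :: w₂) = c :: (x ++ d :: w₂) := by simp
    rw [this, ← hwc]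
    exact h1
  have hB : Prec π ((x ++ (d :: w₂)) ++ [c]) ((x ++ (b :: v₃)) ++ [c]) := by
    refine (prec_shift π hloc hxne (by simp [hlw₂, hu34])).mp ?_
    have h3 : (c :: x) ++ (d :: w₂) = c :: (x ++ d :: w₂) := by simp
    rw [h3, ← hwc, ← hv'app]
    exact h2
  refine hconsec ((k + 1) % s.length) (Nat.mod_lt _ (by omega)) ⟨?_, ?_⟩
  · rw [hw', hueq]
    have : x ++ a :: u₃ = x ++ (a :: u₃) := by simp
    rw [this]
    exact hA
  · rw [hw', hveq]
    have : x ++ b :: v₃ = x ++ (b :: v₃) := by simp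
    rw [this]
    exact hB
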